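/- arXiv:2406.06189 — 3 statements merged into one kernel-verified Lean document; each statement's English description precedes it below -/
import Mathlib

section
/- Let $F:\mathbb{R}^n \to \mathbb{R}^n$ be differentiable and let $G_j$ be the implicit local solve map satisfying $R_j F(R_j^T G_j(u) + (I - R_j^T R_j)u) = 0$ for all $u$, with $G_j$ differentiable. Assume the local Jacobian $R_j \nabla F(\tilde u_j) R_j^T$ is invertible, where $\tilde u_j = R_j^T G_j(u) + (I - R_j^T R_j)u$. Then $\nabla G_j(u) = -(R_j \nabla F(\tilde u_j) R_j^T)^{-1} R_j \nabla F(\tilde u_j)(I - R_j^T R_j)$. -/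
/-! Differentiating the identity `R F(φ u) = 0`, where `φ u = Rᵀ G u + (I - Rᵀ R) u`, gives
`R ∇F(φ u) (Rᵀ ∇G u + I - Rᵀ R) = 0` by the chain rule; multiplying by the inverse of the
local Jacobian `R ∇F(φ u) Rᵀ` solves this linear equation for `∇G u`. -/

open Matrix

namespace Matrix

variable {l m n : Type*}

theorem hasFDerivAt_comp [Fintype l] [Fintype m] [Fintype n] {g : (n → ℝ) → m → ℝ}
    {F : (m → ℝ) → l → ℝ} {A : Matrix m n ℝ} {J : Matrix l m ℝ} {x : n → ℝ}
    (hF : HasFDerivAt F (LinearMap.toContinuousLinearMap J.mulVecLin) (g x))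
    (hg : HasFDerivAt g (LinearMap.toContinuousLinearMap A.mulVecLin) x) :
    HasFDerivAt (fun y => F (g y)) (LinearMap.toContinuousLinearMap (J * A).mulVecLin) x := by
  refine (hF.comp x hg).congr_fderiv ?_
  ext v
  simp [mulVecLin_mul]

theorem hasFDerivAt_mulVec_comp [Fintype l] [Fintype m] [Fintype n] {g : (n → ℝ) → m → ℝ}
    {A : Matrix m n ℝ} {x : n → ℝ} (B : Matrix l m ℝ)
    (hg : HasFDerivAt g (LinearMap.toContinuousLinearMap A.mulVecLin) x) :
    HasFDerivAt (fun y => B *ᵥ g y) (LinearMap.toContinuousLinearMap (B * A).mulVecLin) x :=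
  hasFDerivAt_comp (LinearMap.toContinuousLinearMap B.mulVecLin).hasFDerivAt hg

theorem eq_zero_of_hasFDerivAt_of_forall_eq [Fintype n] {f : (n → ℝ) → m → ℝ}
    {A : Matrix m n ℝ} {x : n → ℝ} {c : m → ℝ}
    (hf : HasFDerivAt f (LinearMap.toContinuousLinearMap A.mulVecLin) x)
    (hc : ∀ y, f y = c) : A = 0 := by
  have hconst : HasFDerivAt f (0 : (n → ℝ) →L[ℝ] m → ℝ) x := by
    simpa only [funext hc] using hasFDerivAt_const (𝕜 := ℝ) c x
  have hlin : A.mulVecLin = 0 :=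
    LinearMap.toContinuousLinearMap.injective (hf.unique hconst)
  refine ext_iff_mulVec.mpr fun v => ?_
  simpa using LinearMap.congr_fun hlin v

theorem eq_neg_inv_mul_of_mul_add_eq_zero [Fintype m] [Fintype n] [DecidableEq m]
    {A : Matrix m n ℝ} {P : Matrix n m ℝ} {D : Matrix m n ℝ} {Q : Matrix n n ℝ}
    (hAP : IsUnit (A * P)) (h : A * (P * D + Q) = 0) : D = -((A * P)⁻¹ * A * Q) := by
  have hAPD : A * P * D = -(A * Q) := by
    rw [eq_neg_iff_add_eq_zero, Matrix.mul_assoc, ← Matrix.mul_add, h]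
  calc D = (A * P)⁻¹ * (A * P) * D := by
        rw [nonsing_inv_mul _ ((isUnit_iff_isUnit_det _).mp hAP), Matrix.one_mul]
    _ = -((A * P)⁻¹ * A * Q) := by
        rw [Matrix.mul_assoc, hAPD, Matrix.mul_neg, Matrix.mul_assoc]

theorem hasFDerivAt_subdomain_update [Fintype m] [Fintype n] [DecidableEq n]
    {G : (n → ℝ) → m → ℝ} {DG : Matrix m n ℝ} {u : n → ℝ} (R : Matrix m n ℝ)
    (hG : HasFDerivAt G (LinearMap.toContinuousLinearMap DG.mulVecLin) u) :
    HasFDerivAt (fun v => Rᵀ *ᵥ G v + (v - (Rᵀ * R) *ᵥ v))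
      (LinearMap.toContinuousLinearMap (Rᵀ * DG + (1 - Rᵀ * R)).mulVecLin) u := by
  have hcomplement : HasFDerivAt (fun v : n → ℝ => v - (Rᵀ * R) *ᵥ v)
      (LinearMap.toContinuousLinearMap (1 - Rᵀ * R).mulVecLin) u := by
    convert (LinearMap.toContinuousLinearMap (1 - Rᵀ * R).mulVecLin).hasFDerivAt (x := u)
      using 1 with v
    ext v
    simp [← mulVec_mulVec, mulVec_transpose]
  refine ((hasFDerivAt_mulVec_comp Rᵀ hG).add hcomplement).congr_fderiv ?_
  ext v
  simp

end Matrix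

theorem stmt2_general (n nj : ℕ)
    (F : (Fin n → ℝ) → (Fin n → ℝ))
    (J : (Fin n → ℝ) → Matrix (Fin n) (Fin n) ℝ)
    (hF : ∀ x, HasFDerivAt F (LinearMap.toContinuousLinearMap (J x).mulVecLin) x)
    (R : Matrix (Fin nj) (Fin n) ℝ)
    (G : (Fin n → ℝ) → (Fin nj → ℝ))
    (DG : (Fin n → ℝ) → Matrix (Fin nj) (Fin n) ℝ)
    (hGd : ∀ u, HasFDerivAt G (LinearMap.toContinuousLinearMap (DG u).mulVecLin) u)
    (hG : ∀ u, R.mulVec (F (Rᵀ.mulVec (G u) + (u - (Rᵀ * R).mulVec u))) = 0)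
    (u : Fin n → ℝ)
    (ut : Fin n → ℝ) (hut : ut = Rᵀ.mulVec (G u) + (u - (Rᵀ * R).mulVec u))
    (hinv : IsUnit (R * J ut * Rᵀ)) :
    DG u = -((R * J ut * Rᵀ)⁻¹ * (R * J ut) * (1 - Rᵀ * R)) := by
  subst hut
  have hlocal := Matrix.hasFDerivAt_mulVec_comp R
    (Matrix.hasFDerivAt_comp (hF _) (Matrix.hasFDerivAt_subdomain_update R (hGd u)))
  rw [← Matrix.mul_assoc] at hlocal
  exact Matrix.eq_neg_inv_mul_of_mul_add_eq_zero hinv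
    (Matrix.eq_zero_of_hasFDerivAt_of_forall_eq hlocal hG)

theorem stmt2 (n nj : ℕ)
    (F : (Fin n → ℝ) → (Fin n → ℝ))
    (J : (Fin n → ℝ) → Matrix (Fin n) (Fin n) ℝ)
    (hF : ∀ x, HasFDerivAt F (LinearMap.toContinuousLinearMap (J x).mulVecLin) x)
    (R : Matrix (Fin nj) (Fin n) ℝ) (hRRT : R * Rᵀ = 1)
    (G : (Fin n → ℝ) → (Fin nj → ℝ))
    (DG : (Fin n → ℝ) → Matrix (Fin nj) (Fin n) ℝ)
    (hGd : ∀ u, HasFDerivAt G (LinearMap.toContinuousLinearMap (DG u).mulVecLin) u)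
    (hG : ∀ u, R.mulVec (F (Rᵀ.mulVec (G u) + (u - (Rᵀ * R).mulVec u))) = 0)
    (u : Fin n → ℝ)
    (ut : Fin n → ℝ) (hut : ut = Rᵀ.mulVec (G u) + (u - (Rᵀ * R).mulVec u))
    (hinv : IsUnit (R * J ut * Rᵀ)) :
    DG u = -((R * J ut * Rᵀ)⁻¹ * (R * J ut) * (1 - Rᵀ * R)) :=
  stmt2_general n nj F J hF R G DG hGd hG u ut hut hinv
end

section
/- Consider nodes $i, \ell$ with transmissibility $\tau_{i\ell} \in \mathbb{R}$ and define the upwind depth $h_{i\ell} = h_i$ if $\tau_{i\ell}(u_i - u_\ell) \ge 0$ and $h_{i\ell} = h_\ell$ otherwise, where $h_i, h_\ell \ge 0$. If $\tau_{i\ell} \ge 0$, then the upwind flux $q_{i\ell} = \tau_{i\ell} h_{i\ell}^\alpha (u_i - u_\ell)$ (with $\alpha \ge 0$) satisfies the monotonicity property: $q_{i\ell}$ is nondecreasing in $u_i$ and nonincreasing in $u_\ell$, provided $h_i = \max(u_i - z_i, 0)$ and $h_\ell = \max(u_\ell - z_\ell, 0)$. -/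
/-!
For `τ > 0` the upwind test `0 ≤ τ (uᵢ - uₗ)` is just `uₗ ≤ uᵢ`, and for `τ = 0` the flux vanishes,
so the flux is `τ` times `x ↦ (if uₗ ≤ x then f x else c) * (x - uₗ)` with `f` monotone and
`f, c ≥ 0`. That map is `≤ 0` left of `uₗ`, `≥ 0` right of it, and on each side a product of
monotone factors of constant sign. Exchanging the two nodes only flips the sign of the flux, which
turns monotonicity in `uᵢ` into antitonicity in `uₗ`.
-/

lemma monotone_upwind_mul_sub {f : ℝ → ℝ} (hf : Monotone f) (hf0 : ∀ x, 0 ≤ f x)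
    {c : ℝ} (hc : 0 ≤ c) (ul : ℝ) :
    Monotone fun x => (if ul ≤ x then f x else c) * (x - ul) := by
  intro a b hab
  dsimp only
  by_cases ha : ul ≤ a
  · have hb : ul ≤ b := ha.trans hab
    rw [if_pos ha, if_pos hb]
    exact mul_le_mul (hf hab) (by linarith) (by linarith) (hf0 b)
  · rw [if_neg ha]
    split_ifs with hb
    · exact (mul_nonpos_of_nonneg_of_nonpos hc (by linarith)).trans
        (mul_nonneg (hf0 b) (sub_nonneg.mpr hb))
    · exact mul_le_mul_of_nonneg_left (by linarith) hc

lemma upwind_mul_sub_swap (a b x y : ℝ) :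
    (if y ≤ x then a else b) * (x - y) = -((if x ≤ y then b else a) * (y - x)) := by
  rcases lt_trichotomy x y with h | rfl | h
  · rw [if_neg (not_le.mpr h), if_pos h.le]
    ring
  · simp
  · rw [if_pos h.le, if_neg (not_le.mpr h)]
    ring

lemma antitone_upwind_mul_sub {g : ℝ → ℝ} (hg : Monotone g) (hg0 : ∀ x, 0 ≤ g x)
    {c : ℝ} (hc : 0 ≤ c) (ui : ℝ) :
    Antitone fun y => (if y ≤ ui then c else g y) * (ui - y) := by
  convert (monotone_upwind_mul_sub hg hg0 hc ui).neg using 2 with y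
  exact upwind_mul_sub_swap c (g y) ui y

lemma mul_ite_mul_eq_of_nonneg {τ : ℝ} (hτ : 0 ≤ τ) (a b d : ℝ) :
    τ * (if 0 ≤ τ * d then a else b) * d = τ * ((if 0 ≤ d then a else b) * d) := by
  rcases hτ.eq_or_lt with rfl | hτ
  · simp
  · simp only [mul_nonneg_iff_of_pos_left hτ, mul_assoc]

lemma monotone_max_sub_zero_rpow (z : ℝ) {α : ℝ} (hα : 0 ≤ α) :
    Monotone fun x : ℝ => max (x - z) 0 ^ α :=
  fun _ _ hab => Real.rpow_le_rpow (le_max_right _ _) (max_le_max (by linarith) le_rfl) hα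

theorem stmt5 (τ α zi zl : ℝ) (hτ : 0 ≤ τ) (hα : 0 ≤ α) :
    (∀ ul : ℝ, Monotone fun ui : ℝ =>
      τ * (if 0 ≤ τ * (ui - ul) then max (ui - zi) 0 else max (ul - zl) 0) ^ α * (ui - ul)) ∧
    (∀ ui : ℝ, Antitone fun ul : ℝ =>
      τ * (if 0 ≤ τ * (ui - ul) then max (ui - zi) 0 else max (ul - zl) 0) ^ α * (ui - ul)) := by
  have hmob : ∀ z x : ℝ, 0 ≤ max (x - z) 0 ^ α := fun _ _ => Real.rpow_nonneg (le_max_right _ _) _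
  simp only [ite_pow, mul_ite_mul_eq_of_nonneg hτ, sub_nonneg]
  exact ⟨fun ul => (monotone_upwind_mul_sub (monotone_max_sub_zero_rpow zi hα) (hmob zi)
      (hmob zl ul) ul).const_mul hτ,
    fun ui => (antitone_upwind_mul_sub (monotone_max_sub_zero_rpow zl hα) (hmob zl)
      (hmob zi ui) ui).const_mul hτ⟩
end

section
/- Let $A \in \mathbb{R}^{n \times n}$ with nonpositive off-diagonal entries ($A_{i\ell} \le 0$ for $i \ne \ell$) and nonnegative row sums ($\sum_\ell A_{i\ell} \ge 0$ for all $i$), let $M$ be a diagonal matrix with strictly positive diagonal entries, and let $\Delta t > 0$. Suppose $u \in \mathbb{R}^n$ satisfies $\frac{1}{\Delta t} M(u - u^{old}) + A u = 0$ with $u^{old} \ge 0$ componentwise. Then $u \ge 0$ componentwise. -/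
/-! A minimal component `u j` of the solution sees `∑ ℓ, A j ℓ * u ℓ ≤ 0`, because the row of `A`
charges each `u ℓ - u j ≥ 0` with a nonpositive weight and `u j` itself with the nonnegative row
sum. If `u j` were negative, the mass term `m j (u j - uold j) / Δt` would be negative too, and the
`j`-th equation could not balance. -/

theorem sum_mul_nonpos_of_min_nonpos {ι R : Type*} [Fintype ι] [CommRing R] [LinearOrder R]
    [IsStrictOrderedRing R] {a u : ι → R} {j : ι} (ha : ∀ ℓ, j ≠ ℓ → a ℓ ≤ 0)
    (hsum : 0 ≤ ∑ ℓ, a ℓ) (hmin : ∀ ℓ, u j ≤ u ℓ) (hj : u j ≤ 0) :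
    ∑ ℓ, a ℓ * u ℓ ≤ 0 := by
  have hsplit : ∑ ℓ, a ℓ * u ℓ = ∑ ℓ, a ℓ * (u ℓ - u j) + (∑ ℓ, a ℓ) * u j := by
    rw [Finset.sum_mul, ← Finset.sum_add_distrib]
    exact Finset.sum_congr rfl fun ℓ _ => by ring
  have hoff : ∑ ℓ, a ℓ * (u ℓ - u j) ≤ 0 := by
    refine Finset.sum_nonpos fun ℓ _ => ?_
    rcases eq_or_ne j ℓ with rfl | hne
    · simp
    · exact mul_nonpos_of_nonpos_of_nonneg (ha ℓ hne) (sub_nonneg.mpr (hmin ℓ))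
  rw [hsplit]
  linarith [mul_nonpos_of_nonneg_of_nonpos hsum hj]

theorem stmt6 (n : ℕ) (A : Matrix (Fin n) (Fin n) ℝ)
    (hoff : ∀ i ℓ, i ≠ ℓ → A i ℓ ≤ 0)
    (hrow : ∀ i, 0 ≤ ∑ ℓ, A i ℓ)
    (m : Fin n → ℝ) (hm : ∀ i, 0 < m i)
    (Δt : ℝ) (hΔt : 0 < Δt)
    (u uold : Fin n → ℝ) (huold : ∀ i, 0 ≤ uold i)
    (heq : ∀ i, (1 / Δt) * (m i * (u i - uold i)) + ∑ ℓ, A i ℓ * u ℓ = 0) :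
    ∀ i, 0 ≤ u i := by
  intro i
  have : Nonempty (Fin n) := ⟨i⟩
  obtain ⟨j, hmin⟩ := Finite.exists_min u
  refine le_trans ?_ (hmin i)
  by_contra! hj
  have hstiffness : ∑ ℓ, A j ℓ * u ℓ ≤ 0 :=
    sum_mul_nonpos_of_min_nonpos (hoff j) (hrow j) hmin hj.le
  have hmass : (1 / Δt) * (m j * (u j - uold j)) < 0 :=
    mul_neg_of_pos_of_neg (one_div_pos.mpr hΔt)
      (mul_neg_of_pos_of_neg (hm j) (by linarith [huold j]))
  linarith [heq j]
end
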